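/- arXiv:2309.15241 — 9 statements merged into one kernel-verified Lean document; each statement's English description precedes it below -/
import Mathlib

section
/- Let G=(V,E) be a Euclidean embedded graph. Then there exists a strictly positive vector β ∈ ℝ^E_{>0} satisfying the complex-balanced condition on G if and only if G is weakly reversible (every connected component of G is strongly connected). -/
open Finset
open scoped Classical

/-- A path from `a` to `b` gives a nonnegative flow whose divergence is the
difference of indicators at the endpoints. -/
private lemma toric_flow_aux {n : ℕ} {E : Type*} [Fintype E]
    (src tgt : E → (Fin n → ℝ)) {a b : Fin n → ℝ}
    (h : Relation.ReflTransGen (fun a b => ∃ e', src e' = a ∧ tgt e' = b) a b) :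
    ∃ f : E → ℝ, (∀ e, 0 ≤ f e) ∧ ∀ v : Fin n → ℝ,
      (∑ e ∈ univ.filter (fun e => tgt e = v), f e)
        - (∑ e ∈ univ.filter (fun e => src e = v), f e)
        = (if v = b then 1 else 0) - (if v = a then 1 else 0) := by
  induction h with
  | refl => exact ⟨fun _ => 0, fun _ => le_refl 0, fun v => by simp⟩
  | @tail b c _ hbc ih =>
    obtain ⟨f, hf0, hf⟩ := ih
    obtain ⟨e', he's, he't⟩ := hbc
    refine ⟨fun x => f x + (if x = e' then 1 else 0), fun x =>
      add_nonneg (hf0 x) (by split_ifs <;> norm_num), fun v => ?_⟩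
    have hsum1 : ∑ x ∈ univ.filter (fun x => tgt x = v), (f x + if x = e' then (1:ℝ) else 0)
        = (∑ x ∈ univ.filter (fun x => tgt x = v), f x) + (if tgt e' = v then 1 else 0) := by
      rw [Finset.sum_add_distrib,
        Finset.sum_ite_eq' (univ.filter (fun x => tgt x = v)) e' (fun _ => (1:ℝ))]
      simp
    have hsum2 : ∑ x ∈ univ.filter (fun x => src x = v), (f x + if x = e' then (1:ℝ) else 0)
        = (∑ x ∈ univ.filter (fun x => src x = v), f x) + (if src e' = v then 1 else 0) := by
      rw [Finset.sum_add_distrib,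
        Finset.sum_ite_eq' (univ.filter (fun x => src x = v)) e' (fun _ => (1:ℝ))]
      simp
    rw [hsum1, hsum2]
    have h1 : (if tgt e' = v then (1:ℝ) else 0) = if v = c then 1 else 0 := by
      simp [he't, eq_comm]
    have h2 : (if src e' = v then (1:ℝ) else 0) = if v = b then 1 else 0 := by
      simp [he's, eq_comm]
    rw [h1, h2]
    have := hf v
    linarith

/-- A Euclidean embedded graph admits a strictly positive
complex-balanced flux vector iff it is weakly reversible (every edge lies
in a directed cycle). -/
theorem toric_stmt_1 {n : ℕ} {E : Type*} [Fintype E]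
    (src tgt : E → (Fin n → ℝ))
    (hloop : ∀ e, src e ≠ tgt e) :
    (∃ β : E → ℝ, (∀ e, 0 < β e) ∧
      ∀ v : Fin n → ℝ,
        ∑ e ∈ univ.filter (fun e => tgt e = v), β e
          = ∑ e ∈ univ.filter (fun e => src e = v), β e) ↔
    (∀ e : E, Relation.ReflTransGen
        (fun a b => ∃ e', src e' = a ∧ tgt e' = b) (tgt e) (src e)) := by
  classical
  constructor
  · rintro ⟨β, hβpos, hbal⟩ e
    by_contra hreach
    set R : (Fin n → ℝ) → (Fin n → ℝ) → Prop :=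
      fun a b => ∃ e', src e' = a ∧ tgt e' = b with hR
    set S : Set (Fin n → ℝ) := {v | Relation.ReflTransGen R (tgt e) v} with hS
    have hSclosed : ∀ e', src e' ∈ S → tgt e' ∈ S := fun e' h =>
      h.tail ⟨e', rfl, rfl⟩
    have htgtS : tgt e ∈ S := Relation.ReflTransGen.refl
    have hsrcS : src e ∉ S := hreach
    set T : Finset (Fin n → ℝ) :=
      (univ.image src ∪ univ.image tgt).filter (· ∈ S) with hT
    set A : Finset E := univ.filter (fun e' => tgt e' ∈ S) with hA
    set B : Finset E := univ.filter (fun e' => src e' ∈ S) with hB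
    have hAT : ∑ v ∈ T, ∑ e' ∈ univ.filter (fun e' => tgt e' = v), β e'
        = ∑ e' ∈ A, β e' := by
      rw [← Finset.sum_fiberwise_of_maps_to (g := tgt) (t := T)
        (fun e' he' => by
          simp only [hA, mem_filter, mem_univ, true_and] at he'
          simp only [hT, mem_filter, mem_union, mem_image]
          exact ⟨Or.inr ⟨e', mem_univ e', rfl⟩, he'⟩) β]
      refine Finset.sum_congr rfl fun v hv => ?_
      have hvS : v ∈ S := (Finset.mem_filter.mp hv).2
      refine Finset.sum_congr ?_ fun _ _ => rfl
      ext e'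
      simp only [hA, mem_filter, mem_univ, true_and]
      exact ⟨fun h2 => ⟨by rw [h2]; exact hvS, h2⟩, fun h2 => h2.2⟩
    have hBT : ∑ v ∈ T, ∑ e' ∈ univ.filter (fun e' => src e' = v), β e'
        = ∑ e' ∈ B, β e' := by
      rw [← Finset.sum_fiberwise_of_maps_to (g := src) (t := T)
        (fun e' he' => by
          simp only [hB, mem_filter, mem_univ, true_and] at he'
          simp only [hT, mem_filter, mem_union, mem_image]
          exact ⟨Or.inl ⟨e', mem_univ e', rfl⟩, he'⟩) β]
      refine Finset.sum_congr rfl fun v hv => ?_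
      have hvS : v ∈ S := (Finset.mem_filter.mp hv).2
      refine Finset.sum_congr ?_ fun _ _ => rfl
      ext e'
      simp only [hB, mem_filter, mem_univ, true_and]
      exact ⟨fun h2 => ⟨by rw [h2]; exact hvS, h2⟩, fun h2 => h2.2⟩
    have heq : ∑ e' ∈ A, β e' = ∑ e' ∈ B, β e' := by
      rw [← hAT, ← hBT]
      exact Finset.sum_congr rfl fun v _ => hbal v
    have hBA : B ⊆ A := by
      intro e' he'
      simp only [hB, mem_filter, mem_univ, true_and] at he'
      simp only [hA, mem_filter, mem_univ, true_and]
      exact hSclosed e' he'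
    have heA : e ∈ A := by simp [hA, htgtS]
    have heB : e ∉ B := by simp [hB, hsrcS]
    have hlt : ∑ e' ∈ B, β e' < ∑ e' ∈ A, β e' :=
      Finset.sum_lt_sum_of_subset hBA heA heB (hβpos e)
        (fun j _ _ => (hβpos j).le)
    linarith
  · intro hwr
    choose f hf0 hfdiv using fun e => toric_flow_aux src tgt (hwr e)
    refine ⟨fun x => ∑ e, (f e x + if x = e then 1 else 0), ?_, ?_⟩
    · intro x
      refine Finset.sum_pos' (fun e _ => add_nonneg (hf0 e x)
        (by split_ifs <;> norm_num)) ⟨x, mem_univ x, ?_⟩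
      have := hf0 x x
      have h : (if x = x then (1:ℝ) else 0) = 1 := if_pos rfl
      rw [h]
      linarith
    · intro v
      rw [Finset.sum_comm (s := univ.filter (fun e => tgt e = v)) (t := univ),
        Finset.sum_comm (s := univ.filter (fun e => src e = v)) (t := univ)]
      refine Finset.sum_congr rfl fun e _ => ?_
      have hsum1 : ∑ x ∈ univ.filter (fun x => tgt x = v), (f e x + if x = e then (1:ℝ) else 0)
          = (∑ x ∈ univ.filter (fun x => tgt x = v), f e x) + (if tgt e = v then 1 else 0) := by
        rw [Finset.sum_add_distrib,
          Finset.sum_ite_eq' (univ.filter (fun x => tgt x = v)) e (fun _ => (1:ℝ))]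
        simp
      have hsum2 : ∑ x ∈ univ.filter (fun x => src x = v), (f e x + if x = e then (1:ℝ) else 0)
          = (∑ x ∈ univ.filter (fun x => src x = v), f e x) + (if src e = v then 1 else 0) := by
        rw [Finset.sum_add_distrib,
          Finset.sum_ite_eq' (univ.filter (fun x => src x = v)) e (fun _ => (1:ℝ))]
        simp
      rw [hsum1, hsum2]
      have h1 : (if tgt e = v then (1:ℝ) else 0) = if v = tgt e then 1 else 0 := by
        simp [eq_comm]
      have h2 : (if src e = v then (1:ℝ) else 0) = if v = src e then 1 else 0 := by
        simp [eq_comm]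
      rw [h1, h2]
      have := hfdiv e v
      linarith
end

section
/- Let G=(V,E) be a weakly reversible Euclidean embedded graph with a single (strongly) connected component, let β ∈ ℝ^E_{>0} be a complex-balanced flux vector, and let c : V → ℝ be a weight function. If the vector β̃ defined by β̃_{y→y'} = c(y)·β_{y→y'} also satisfies the complex-balanced condition, then c is constant on V. -/
open Finset
open scoped Classical

/-- On a strongly connected Euclidean embedded graph, if β is a
positive complex-balanced flux vector and the reweighted vector
β̃_{y→y'} = c(y)·β_{y→y'} is also complex-balanced, then the weight
function c is constant on the vertex set. -/
theorem toric_stmt_2 {n : ℕ} {E : Type*} [Fintype E]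
    (src tgt : E → (Fin n → ℝ))
    (hsc : ∀ a b : Fin n → ℝ,
      (∃ e, src e = a ∨ tgt e = a) → (∃ e, src e = b ∨ tgt e = b) →
      Relation.ReflTransGen (fun u w => ∃ e, src e = u ∧ tgt e = w) a b)
    (β : E → ℝ) (hβpos : ∀ e, 0 < β e)
    (hβ : ∀ v : Fin n → ℝ,
      ∑ e ∈ univ.filter (fun e => tgt e = v), β e
        = ∑ e ∈ univ.filter (fun e => src e = v), β e)
    (c : (Fin n → ℝ) → ℝ)
    (hβ' : ∀ v : Fin n → ℝ,
      ∑ e ∈ univ.filter (fun e => tgt e = v), c (src e) * β e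
        = ∑ e ∈ univ.filter (fun e => src e = v), c (src e) * β e) :
    ∀ a b : Fin n → ℝ,
      (∃ e, src e = a ∨ tgt e = a) → (∃ e, src e = b ∨ tgt e = b) →
      c a = c b := by
  intro a b ha hb
  set V : Finset (Fin n → ℝ) := univ.image src ∪ univ.image tgt with hV
  have hmemV : ∀ u, u ∈ V ↔ ∃ e, src e = u ∨ tgt e = u := by
    intro u
    simp [hV, Finset.mem_union, Finset.mem_image, exists_or]
  have haV : a ∈ V := (hmemV a).2 ha
  obtain ⟨m, hmV, hmax⟩ := V.exists_max_image c ⟨a, haV⟩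
  have hmaxV : ∀ u, (∃ e, src e = u ∨ tgt e = u) → c u ≤ c m := by
    intro u hu; exact hmax u ((hmemV u).2 hu)
  -- key: if the target of an edge has maximal weight, so does its source
  have key : ∀ e0 : E, c (tgt e0) = c m → c (src e0) = c m := by
    intro e0 he0
    set v := tgt e0 with hv
    have h2 : ∑ e ∈ univ.filter (fun e => src e = v), c (src e) * β e
        = c m * ∑ e ∈ univ.filter (fun e => src e = v), β e := by
      rw [Finset.mul_sum]
      refine Finset.sum_congr rfl fun e he => ?_
      have hse : src e = v := (Finset.mem_filter.1 he).2
      rw [hse, he0]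
    have h3 : ∑ e ∈ univ.filter (fun e => tgt e = v), c (src e) * β e
        = c m * ∑ e ∈ univ.filter (fun e => tgt e = v), β e := by
      rw [hβ' v, h2, hβ v]
    have h1 : ∑ e ∈ univ.filter (fun e => tgt e = v), (c m - c (src e)) * β e = 0 := by
      have : ∑ e ∈ univ.filter (fun e => tgt e = v), (c m - c (src e)) * β e
          = c m * ∑ e ∈ univ.filter (fun e => tgt e = v), β e
            - ∑ e ∈ univ.filter (fun e => tgt e = v), c (src e) * β e := by
        rw [Finset.mul_sum, ← Finset.sum_sub_distrib]
        refine Finset.sum_congr rfl fun e _ => by ring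
      rw [this, h3, sub_self]
    have hnn : ∀ e ∈ univ.filter (fun e => tgt e = v), 0 ≤ (c m - c (src e)) * β e := by
      intro e _
      exact mul_nonneg (sub_nonneg.2 (hmaxV (src e) ⟨e, Or.inl rfl⟩)) (hβpos e).le
    have hzero := (Finset.sum_eq_zero_iff_of_nonneg hnn).1 h1
    have he0mem : e0 ∈ univ.filter (fun e => tgt e = v) := by
      simp [hv]
    have := hzero e0 he0mem
    rcases mul_eq_zero.1 this with h | h
    · linarith [sub_eq_zero.1 h]
    · exact absurd h (hβpos e0).ne'
  -- propagate along any path ending at m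
  have hall : ∀ u, (∃ e, src e = u ∨ tgt e = u) → c u = c m := by
    intro u hu
    have path := hsc u m hu ((hmemV m).1 hmV)
    induction path using Relation.ReflTransGen.head_induction_on with
    | refl => rfl
    | head hxy _ ih =>
        obtain ⟨e, hes, het⟩ := hxy
        have : c (tgt e) = c m := het ▸ ih ⟨e, Or.inr het⟩
        exact hes ▸ key e this
  rw [hall a ha, hall b hb]
end

section
/- Let G=(V,E) be a weakly reversible directed graph, β ∈ ℝ^E_{>0} a complex-balanced flux vector, and c : V → ℝ a weight function such that the vector (c(y)·β_{y→y'})_{y→y'∈E} satisfies the complex-balanced condition. Then c is constant on each connected component of G: if y and y' lie in the same connected component, then c(y) = c(y'). -/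
open Finset
open scoped Classical

/-- On a weakly reversible graph, if β is a positive
complex-balanced flux vector and (c(y)·β_{y→y'}) is also complex-balanced,
then c is constant on each connected component: vertices in the same
connected component get equal weights. -/
theorem toric_stmt_3 {n : ℕ} {E : Type*} [Fintype E]
    (src tgt : E → (Fin n → ℝ))
    (hwr : ∀ e : E, Relation.ReflTransGen
      (fun a b => ∃ e', src e' = a ∧ tgt e' = b) (tgt e) (src e))
    (β : E → ℝ) (hβpos : ∀ e, 0 < β e)
    (hβ : ∀ v : Fin n → ℝ,
      ∑ e ∈ univ.filter (fun e => tgt e = v), β e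
        = ∑ e ∈ univ.filter (fun e => src e = v), β e)
    (c : (Fin n → ℝ) → ℝ)
    (hβ' : ∀ v : Fin n → ℝ,
      ∑ e ∈ univ.filter (fun e => tgt e = v), c (src e) * β e
        = ∑ e ∈ univ.filter (fun e => src e = v), c (src e) * β e) :
    ∀ a b : Fin n → ℝ,
      Relation.ReflTransGen
        (fun u w => (∃ e, src e = u ∧ tgt e = w) ∨ (∃ e, src e = w ∧ tgt e = u))
        a b →
      c a = c b := by
  set r : (Fin n → ℝ) → (Fin n → ℝ) → Prop :=
    fun a b => ∃ e', src e' = a ∧ tgt e' = b with hr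
  set R : (Fin n → ℝ) → (Fin n → ℝ) → Prop := Relation.ReflTransGen r with hR
  -- key balance identity at each vertex
  have key : ∀ v : Fin n → ℝ,
      ∑ e ∈ univ.filter (fun e => tgt e = v), (c (src e) - c v) * β e = 0 := by
    intro v
    have h1 : ∑ e ∈ univ.filter (fun e => src e = v), c (src e) * β e
        = c v * ∑ e ∈ univ.filter (fun e => src e = v), β e := by
      rw [Finset.mul_sum]
      refine Finset.sum_congr rfl ?_
      intro e he
      simp only [mem_filter] at he
      rw [he.2]
    have h2 := hβ' v
    have h3 := hβ v
    simp only [sub_mul, Finset.sum_sub_distrib]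
    rw [h2, h1, ← h3, ← Finset.mul_sum]
    ring
  -- c agrees across every edge
  have edge_eq : ∀ e0 : E, c (src e0) = c (tgt e0) := by
    intro e0
    set v0 := src e0 with hv0
    set T : Finset E := univ.filter (fun e => R v0 (src e)) with hT
    have hTne : T.Nonempty :=
      ⟨e0, by
        simp only [hT, mem_filter, mem_univ, true_and]
        exact Relation.ReflTransGen.refl⟩
    obtain ⟨estar, hestar, hmax⟩ := T.exists_max_image (fun e => c (src e)) hTne
    have hvstar : R v0 (src estar) := by
      simp only [hT, mem_filter] at hestar; exact hestar.2
    set M := c (src estar) with hM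
    have claim : ∀ u, R u (src estar) → R v0 u → c u = M := by
      intro u hu
      induction hu using Relation.ReflTransGen.head_induction_on with
      | refl => intro _; rfl
      | @head u u' hstep htail ih =>
        intro hRu
        obtain ⟨e, hes, het⟩ := hstep
        have hRu' : R v0 u' := hRu.tail ⟨e, hes, het⟩
        have hcu' : c u' = M := ih hRu'
        have hz := key u'
        have hnp : ∀ e' ∈ univ.filter (fun e' => tgt e' = u'),
            (c (src e') - c u') * β e' ≤ 0 := by
          intro e' he'
          simp only [mem_filter] at he'
          have h4 : R u' (src e') := by rw [← he'.2]; exact hwr e'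
          have h5 : R v0 (src e') := hRu'.trans h4
          have hle : c (src e') ≤ M := hmax e' (by simp [hT, h5])
          have : c (src e') - c u' ≤ 0 := by rw [hcu']; linarith
          exact mul_nonpos_of_nonpos_of_nonneg this (hβpos e').le
        have hall := (Finset.sum_eq_zero_iff_of_nonpos hnp).1 hz
        have h6 := hall e (by simp [het])
        have h7 : c (src e) = c u' := by
          rcases mul_eq_zero.1 h6 with h | h
          · linarith [sub_eq_zero.1 h]
          · exact absurd h (hβpos e).ne'
        rw [← hes, h7, hcu']
    have h1 : c v0 = M := claim v0 hvstar Relation.ReflTransGen.refl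
    have h2 : c (tgt e0) = M :=
      claim (tgt e0) ((hwr e0).trans hvstar)
        (Relation.ReflTransGen.single ⟨e0, rfl, rfl⟩)
    exact h1.trans h2.symm
  intro a b hab
  induction hab with
  | refl => rfl
  | @tail w x hab' hstep ih =>
    rcases hstep with ⟨e, hs, ht⟩ | ⟨e, hs, ht⟩
    · rw [ih, ← hs, ← ht, edge_eq e]
    · rw [ih, ← hs, ← ht, edge_eq e]
end

section
/- Let G=(V,E) be a weakly reversible directed graph, β ∈ ℝ^E_{>0} a complex-balanced flux vector, and c : V → ℝ a nonconstant function on some strongly connected component. Setting M to be the maximum of c over that component and V_M = {y : c(y) = M}, there exist vertices y₀ ∈ V_M and ŷ ∉ V_M in the same component with an edge ŷ → y₀ ∈ E, and at y₀ the total weighted incoming flux ∑_{y''→y₀} c(y'')β_{y''→y₀} is strictly less than c(y₀)·∑_{y''→y₀} β_{y''→y₀}. -/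
open Finset
open scoped Classical

/-- Weakly reversible graph, positive complex-balanced flux β,
c nonconstant on a strongly connected component C. With M = max of c over C
and V_M = {y ∈ C : c(y) = M}, there exist y₀ ∈ V_M and yhat ∈ C \ V_M with an
edge yhat → y₀, and the total weighted incoming flux at y₀ is strictly less
than c(y₀) times the total incoming flux. -/
theorem toric_stmt_4 {n : ℕ} {E : Type*} [Fintype E]
    (src tgt : E → (Fin n → ℝ))
    (hwr : ∀ e : E, Relation.ReflTransGen
      (fun a b => ∃ e', src e' = a ∧ tgt e' = b) (tgt e) (src e))
    (β : E → ℝ) (hβpos : ∀ e, 0 < β e)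
    (hβ : ∀ v : Fin n → ℝ,
      ∑ e ∈ univ.filter (fun e => tgt e = v), β e
        = ∑ e ∈ univ.filter (fun e => src e = v), β e)
    (C : Finset (Fin n → ℝ)) (hCne : C.Nonempty)
    (hCvert : ∀ v ∈ C, ∃ e, src e = v ∨ tgt e = v)
    (hCstrong : ∀ a ∈ C, ∀ b ∈ C, Relation.ReflTransGen
      (fun u w => ∃ e, src e = u ∧ tgt e = w) a b)
    (hCclosed : ∀ e : E, (src e ∈ C ↔ tgt e ∈ C))
    (c : (Fin n → ℝ) → ℝ)
    (hnc : ∃ a ∈ C, ∃ b ∈ C, c a ≠ c b) :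
    ∃ y₀ ∈ C, ∃ yhat ∈ C,
      c y₀ = C.sup' hCne c ∧ c yhat < C.sup' hCne c ∧
      (∃ e, src e = yhat ∧ tgt e = y₀) ∧
      ∑ e ∈ univ.filter (fun e => tgt e = y₀), c (src e) * β e
        < c y₀ * ∑ e ∈ univ.filter (fun e => tgt e = y₀), β e := by

  classical
  set M := C.sup' hCne c with hM
  have hle : ∀ x ∈ C, c x ≤ M := fun x hx => Finset.le_sup' c hx
  obtain ⟨a, haC, haM⟩ := Finset.exists_mem_eq_sup' hCne c
  have hexlt : ∃ x ∈ C, c x < M := by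
    by_contra h
    push_neg at h
    obtain ⟨p, hpC, q, hqC, hpq⟩ := hnc
    have hp : c p = M := le_antisymm (hle p hpC) (h p hpC)
    have hq : c q = M := le_antisymm (hle q hqC) (h q hqC)
    exact hpq (hp.trans hq.symm)
  obtain ⟨x, hxC, hxlt⟩ := hexlt
  have key : ∀ z, Relation.ReflTransGen (fun u w => ∃ e, src e = u ∧ tgt e = w) z a →
      z ∈ C → c z < M →
      ∃ y₀ ∈ C, ∃ yhat ∈ C, c y₀ = M ∧ c yhat < M ∧ ∃ e, src e = yhat ∧ tgt e = y₀ := by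
    intro z hz
    induction hz using Relation.ReflTransGen.head_induction_on with
    | refl => intro _ hlt; exact absurd haM (ne_of_gt hlt)
    | @head u w h htail ih =>
      intro huC hult
      obtain ⟨e, hes, het⟩ := h
      have hwC : w ∈ C := by
        have := (hCclosed e).mp (hes ▸ huC)
        rwa [het] at this
      by_cases hcw : c w = M
      · exact ⟨w, hwC, u, huC, hcw, hult, e, hes, het⟩
      · exact ih hwC (lt_of_le_of_ne (hle w hwC) hcw)
  obtain ⟨y₀, hy₀C, yhat, hyhatC, hy₀M, hyhatM, e₀, he₀s, he₀t⟩ :=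
    key x (hCstrong x hxC a haC) hxC hxlt
  refine ⟨y₀, hy₀C, yhat, hyhatC, hy₀M, hyhatM, ⟨e₀, he₀s, he₀t⟩, ?_⟩
  have he₀mem : e₀ ∈ univ.filter (fun e => tgt e = y₀) := by
    simp [he₀t]
  rw [Finset.mul_sum]
  refine Finset.sum_lt_sum (fun e he => ?_) ⟨e₀, he₀mem, ?_⟩
  · have het : tgt e = y₀ := by simpa using he
    have hsrcC : src e ∈ C := (hCclosed e).mpr (het ▸ hy₀C)
    have : c (src e) ≤ c y₀ := by rw [hy₀M]; exact hle _ hsrcC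
    exact mul_le_mul_of_nonneg_right this (hβpos e).le
  · have : c (src e₀) < c y₀ := by rw [he₀s, hy₀M]; exact hyhatM
    exact mul_lt_mul_of_pos_right this (hβpos e₀)
end

section
/- Let G=(V,E) be a weakly reversible Euclidean embedded graph with stoichiometric subspace S ⊆ ℝⁿ and flux space B̃(G) ⊆ ℝ^E. Fix x ∈ ℝⁿ_{>0} and β ∈ ℝ^E_{>0} a complex-balanced flux vector. If (ṽ, β̃) ∈ S × B̃(G) satisfies, for every edge y→y' ∈ E, β_{y→y'}·(∑_{i=1}^n (y_i/x_i)·ṽ_i) = β̃_{y→y'}, then ṽ = 0 and β̃ = 0. -/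
open Finset
open scoped Classical

/-- Kernel triviality for the immersion: if ṽ ∈ S,
β̃ ∈ B̃(G), and β_{y→y'}·(∑ᵢ (yᵢ/xᵢ)·ṽᵢ) = β̃_{y→y'} for all edges
(y the source vertex), then ṽ = 0 and β̃ = 0. -/
theorem toric_stmt_7 {n : ℕ} {E : Type*} [Fintype E]
    (src tgt : E → (Fin n → ℝ))
    (hwr : ∀ e : E, Relation.ReflTransGen
      (fun a b => ∃ e', src e' = a ∧ tgt e' = b) (tgt e) (src e))
    (x : Fin n → ℝ) (hx : ∀ i, 0 < x i)
    (β : E → ℝ) (hβpos : ∀ e, 0 < β e)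
    (hβ : ∀ v : Fin n → ℝ,
      ∑ e ∈ univ.filter (fun e => tgt e = v), β e
        = ∑ e ∈ univ.filter (fun e => src e = v), β e)
    (vt : Fin n → ℝ)
    (hvt : vt ∈ Submodule.span ℝ {d : Fin n → ℝ | ∃ e, d = tgt e - src e})
    (βt : E → ℝ)
    (hβt : ∀ v : Fin n → ℝ,
      ∑ e ∈ univ.filter (fun e => tgt e = v), βt e
        = ∑ e ∈ univ.filter (fun e => src e = v), βt e)
    (heq : ∀ e, β e * (∑ i, (src e i / x i) * vt i) = βt e) :
    vt = 0 ∧ βt = 0 := by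
  classical
  set h : (Fin n → ℝ) → ℝ := fun y => ∑ i, (y i / x i) * vt i with hh
  -- per-vertex identity
  have key : ∀ v : Fin n → ℝ,
      ∑ e ∈ univ.filter (fun e => tgt e = v), β e * h (src e)
        = h v * ∑ e ∈ univ.filter (fun e => tgt e = v), β e := by
    intro v
    have h1 : ∑ e ∈ univ.filter (fun e => tgt e = v), β e * h (src e)
        = ∑ e ∈ univ.filter (fun e => tgt e = v), βt e :=
      sum_congr rfl fun e _ => heq e
    have h2 : ∑ e ∈ univ.filter (fun e => src e = v), βt e
        = ∑ e ∈ univ.filter (fun e => src e = v), β e * h v := by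
      refine sum_congr rfl fun e he => ?_
      simp only [mem_filter] at he
      rw [← heq e, he.2]
    rw [h1, hβt v, h2, ← sum_mul, ← hβ v, mul_comm]
  set V : Finset (Fin n → ℝ) := (univ.image src) ∪ (univ.image tgt) with hV
  have fibT : ∀ F : E → ℝ,
      ∑ v ∈ V, ∑ e ∈ univ.filter (fun e => tgt e = v), F e = ∑ e, F e := by
    intro F
    exact Finset.sum_fiberwise_of_maps_to
      (fun e _ => mem_union_right _ (mem_image_of_mem _ (mem_univ e))) F
  have fibS : ∀ F : E → ℝ,
      ∑ v ∈ V, ∑ e ∈ univ.filter (fun e => src e = v), F e = ∑ e, F e := by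
    intro F
    exact Finset.sum_fiberwise_of_maps_to
      (fun e _ => mem_union_left _ (mem_image_of_mem _ (mem_univ e))) F
  have hC : ∑ e, β e * h (src e) * h (tgt e)
      = ∑ v ∈ V, h v * h v * ∑ e ∈ univ.filter (fun e => tgt e = v), β e := by
    rw [← fibT (fun e => β e * h (src e) * h (tgt e))]
    refine sum_congr rfl fun v hv => ?_
    have step : ∑ e ∈ univ.filter (fun e => tgt e = v), β e * h (src e) * h (tgt e)
        = (∑ e ∈ univ.filter (fun e => tgt e = v), β e * h (src e)) * h v := by
      rw [sum_mul]
      refine sum_congr rfl fun e he => ?_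
      simp only [mem_filter] at he
      rw [he.2]
    rw [step, key v]; ring
  have hB : ∑ e, β e * h (tgt e) * h (tgt e)
      = ∑ v ∈ V, h v * h v * ∑ e ∈ univ.filter (fun e => tgt e = v), β e := by
    rw [← fibT (fun e => β e * h (tgt e) * h (tgt e))]
    refine sum_congr rfl fun v hv => ?_
    rw [mul_sum]
    refine sum_congr rfl fun e he => ?_
    simp only [mem_filter] at he
    rw [he.2]; ring
  have hA : ∑ e, β e * h (src e) * h (src e)
      = ∑ v ∈ V, h v * h v * ∑ e ∈ univ.filter (fun e => tgt e = v), β e := by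
    rw [← fibS (fun e => β e * h (src e) * h (src e))]
    refine sum_congr rfl fun v hv => ?_
    rw [hβ v, mul_sum]
    refine sum_congr rfl fun e he => ?_
    simp only [mem_filter] at he
    rw [he.2]; ring
  have zero : ∑ e, β e * (h (tgt e) - h (src e)) ^ 2 = 0 := by
    have expand : ∑ e, β e * (h (tgt e) - h (src e)) ^ 2
        = ∑ e, β e * h (tgt e) * h (tgt e) - 2 * ∑ e, β e * h (src e) * h (tgt e)
          + ∑ e, β e * h (src e) * h (src e) := by
      rw [mul_sum, ← sum_sub_distrib, ← sum_add_distrib]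
      refine sum_congr rfl fun e _ => ?_
      ring
    rw [expand, hA, hB, hC]; ring
  have edges : ∀ e, h (tgt e) = h (src e) := by
    intro e
    have nn : ∀ e ∈ (univ : Finset E), 0 ≤ β e * (h (tgt e) - h (src e)) ^ 2 :=
      fun e _ => mul_nonneg (hβpos e).le (sq_nonneg _)
    have he := (sum_eq_zero_iff_of_nonneg nn).mp zero e (mem_univ e)
    have h2 : (h (tgt e) - h (src e)) ^ 2 = 0 := by
      rcases mul_eq_zero.mp he with h' | h'
      · exact absurd h' (ne_of_gt (hβpos e))
      · exact h'
    have := pow_eq_zero_iff (n := 2) (by norm_num) |>.mp h2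
    linarith [sub_eq_zero.mp this]
  -- linear map
  let L : (Fin n → ℝ) →ₗ[ℝ] ℝ :=
    { toFun := fun y => ∑ i, (y i / x i) * vt i
      map_add' := by
        intro a b
        simp [add_div, add_mul, sum_add_distrib]
      map_smul' := by
        intro c a
        simp [Finset.mul_sum, mul_div_assoc, mul_assoc] }
  have hker : {d : Fin n → ℝ | ∃ e, d = tgt e - src e} ⊆ (LinearMap.ker L : Set _) := by
    rintro d ⟨e, rfl⟩
    have : L (tgt e - src e) = L (tgt e) - L (src e) := map_sub L _ _
    simp only [SetLike.mem_coe, LinearMap.mem_ker]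
    rw [this, sub_eq_zero]
    exact edges e
  have hLvt : L vt = 0 := by
    have hle : Submodule.span ℝ {d : Fin n → ℝ | ∃ e, d = tgt e - src e}
        ≤ LinearMap.ker L := Submodule.span_le.mpr hker
    exact LinearMap.mem_ker.mp (hle hvt)
  have hsum : ∑ i, (vt i / x i) * vt i = 0 := hLvt
  have hterm : ∀ i ∈ (univ : Finset (Fin n)), 0 ≤ (vt i / x i) * vt i := by
    intro i _
    rw [div_mul_eq_mul_div]
    exact div_nonneg (mul_self_nonneg _) (hx i).le
  have hvt0 : vt = 0 := by
    funext i
    have := (sum_eq_zero_iff_of_nonneg hterm).mp hsum i (mem_univ i)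
    rw [div_mul_eq_mul_div, div_eq_zero_iff] at this
    rcases this with h' | h'
    · exact mul_self_eq_zero.mp h'
    · exact absurd h' (ne_of_gt (hx i))
  subst hvt0
  refine ⟨rfl, funext fun e => ?_⟩
  rw [← heq e]
  simp
end

section
/- Let G=(V,E) be a weakly reversible Euclidean embedded graph, x₀ ∈ ℝⁿ_{>0}, S its stoichiometric subspace, and let φ : ((x₀+S) ∩ ℝⁿ_{>0}) × B(G) → ℝ^E be defined by φ(x,β) = (β_{y→y'} / x^y)_{y→y'∈E}, where x^y = ∏ᵢ xᵢ^{yᵢ}. Then φ is a smooth map whose differential at every point is injective, i.e., φ is a smooth immersion. -/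
open Finset
open scoped Classical

private lemma contDiffAt_finprod {X : Type*} [NormedAddCommGroup X] [NormedSpace ℝ X]
    {α : Type*} (s : Finset α) (f : α → X → ℝ) {x : X}
    (hf : ∀ a ∈ s, ContDiffAt ℝ (⊤ : ℕ∞) (f a) x) :
    ContDiffAt ℝ (⊤ : ℕ∞) (fun y => ∏ a ∈ s, f a y) x := by
  classical
  induction s using Finset.induction_on with
  | empty => simpa using contDiffAt_const (c := (1 : ℝ))
  | @insert a s ha ih =>
      simp only [Finset.prod_insert ha]
      exact (hf _ (Finset.mem_insert_self _ _)).mul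
        (ih fun b hb => hf b (Finset.mem_insert_of_mem hb))

private lemma sum_fiber {E V : Type*} [Fintype E] [DecidableEq V] (m : E → V) (T : Finset V)
    (hm : ∀ e, m e ∈ T) (F : E → ℝ) :
    ∑ e, F e = ∑ c ∈ T, ∑ e ∈ univ.filter (fun e => m e = c), F e :=
  (Finset.sum_fiberwise_of_maps_to (fun e _ => hm e) F).symm

/-- The combinatorial core: if β is complex balanced and the fluxes
β e * f (src e) are balanced as well, then f (tgt e) = f (src e) for every edge. -/
private lemma quad_core {E V : Type*} [Fintype E] [DecidableEq V]
    (src tgt : E → V) (β : E → ℝ) (f : V → ℝ)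
    (hβ : ∀ e, 0 < β e)
    (hβbal : ∀ v, ∑ e ∈ univ.filter (fun e => tgt e = v), β e
        = ∑ e ∈ univ.filter (fun e => src e = v), β e)
    (hwbal : ∀ v, ∑ e ∈ univ.filter (fun e => tgt e = v), β e * f (src e)
        = ∑ e ∈ univ.filter (fun e => src e = v), β e * f (src e)) :
    ∀ e, f (tgt e) = f (src e) := by
  classical
  set T : Finset V := univ.image src ∪ univ.image tgt with hT
  have hsrcT : ∀ e : E, src e ∈ T := fun e =>
    Finset.mem_union_left _ (Finset.mem_image_of_mem _ (Finset.mem_univ e))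
  have htgtT : ∀ e : E, tgt e ∈ T := fun e =>
    Finset.mem_union_right _ (Finset.mem_image_of_mem _ (Finset.mem_univ e))
  -- A = C
  have hAC : ∑ e, β e * f (src e) ^ 2 = ∑ e, β e * f (tgt e) ^ 2 := by
    rw [sum_fiber src T hsrcT, sum_fiber tgt T htgtT]
    refine Finset.sum_congr rfl fun c _ => ?_
    have h1 : ∑ e ∈ univ.filter (fun e => src e = c), β e * f (src e) ^ 2
        = f c ^ 2 * ∑ e ∈ univ.filter (fun e => src e = c), β e := by
      rw [Finset.mul_sum]
      exact Finset.sum_congr rfl fun e he => by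
        rw [(Finset.mem_filter.mp he).2]; ring
    have h2 : ∑ e ∈ univ.filter (fun e => tgt e = c), β e * f (tgt e) ^ 2
        = f c ^ 2 * ∑ e ∈ univ.filter (fun e => tgt e = c), β e := by
      rw [Finset.mul_sum]
      exact Finset.sum_congr rfl fun e he => by
        rw [(Finset.mem_filter.mp he).2]; ring
    rw [h1, h2, hβbal c]
  -- B = C
  have hBC : ∑ e, β e * (f (src e) * f (tgt e)) = ∑ e, β e * f (tgt e) ^ 2 := by
    rw [sum_fiber tgt T htgtT (fun e => β e * (f (src e) * f (tgt e))),
      sum_fiber tgt T htgtT (fun e => β e * f (tgt e) ^ 2)]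
    refine Finset.sum_congr rfl fun c _ => ?_
    have h1 : ∑ e ∈ univ.filter (fun e => tgt e = c), β e * (f (src e) * f (tgt e))
        = f c * ∑ e ∈ univ.filter (fun e => tgt e = c), β e * f (src e) := by
      rw [Finset.mul_sum]
      exact Finset.sum_congr rfl fun e he => by
        rw [(Finset.mem_filter.mp he).2]; ring
    have h2 : ∑ e ∈ univ.filter (fun e => src e = c), β e * f (src e)
        = f c * ∑ e ∈ univ.filter (fun e => src e = c), β e := by
      rw [Finset.mul_sum]
      exact Finset.sum_congr rfl fun e he => by
        rw [(Finset.mem_filter.mp he).2]; ring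
    have h3 : ∑ e ∈ univ.filter (fun e => tgt e = c), β e * f (tgt e) ^ 2
        = f c ^ 2 * ∑ e ∈ univ.filter (fun e => tgt e = c), β e := by
      rw [Finset.mul_sum]
      exact Finset.sum_congr rfl fun e he => by
        rw [(Finset.mem_filter.mp he).2]; ring
    rw [h1, hwbal c, h2, h3, hβbal c]
    ring
  have hsumsq : ∑ e, β e * (f (tgt e) - f (src e)) ^ 2 = 0 := by
    have hexp : ∑ e, β e * (f (tgt e) - f (src e)) ^ 2
        = ∑ e, (β e * f (tgt e) ^ 2 - 2 * (β e * (f (src e) * f (tgt e)))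
            + β e * f (src e) ^ 2) :=
      Finset.sum_congr rfl fun e _ => by ring
    rw [hexp, Finset.sum_add_distrib, Finset.sum_sub_distrib, ← Finset.mul_sum, hBC, hAC]
    ring
  intro e
  have h := (Finset.sum_eq_zero_iff_of_nonneg
      (fun e _ => mul_nonneg (hβ e).le (sq_nonneg _))).mp hsumsq e (Finset.mem_univ e)
  rcases mul_eq_zero.mp h with h' | h'
  · exact absurd h' (hβ e).ne'
  · have := pow_eq_zero_iff (n := 2) (by norm_num) |>.mp h'
    linarith [sub_eq_zero.mp this]

/-- The map φ(x,β) = (β_{y→y'}/x^y)_{y→y'∈E} on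
((x₀+S)∩ℝⁿ_{>0}) × B(G) is a smooth immersion: it is smooth (its natural
extension is C^∞ on the open set where x > 0), and at every point of the
domain its differential is injective on the tangent space S × B̃(G). -/
theorem toric_stmt_8 {n : ℕ} {E : Type*} [Fintype E]
    (src tgt : E → (Fin n → ℝ))
    (hnn : ∀ e i, 0 ≤ src e i ∧ 0 ≤ tgt e i)
    (hwr : ∀ e : E, Relation.ReflTransGen
      (fun a b => ∃ e', src e' = a ∧ tgt e' = b) (tgt e) (src e))
    (x₀ : Fin n → ℝ) (hx₀ : ∀ i, 0 < x₀ i)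
    (φ : (Fin n → ℝ) × (E → ℝ) → (E → ℝ))
    (hφ : ∀ p, φ p = fun e => p.2 e / ∏ i, p.1 i ^ src e i) :
    ContDiffOn ℝ (⊤ : ℕ∞) φ {p : (Fin n → ℝ) × (E → ℝ) | ∀ i, 0 < p.1 i} ∧
    ∀ x : Fin n → ℝ, ∀ β : E → ℝ,
      x - x₀ ∈ Submodule.span ℝ {d : Fin n → ℝ | ∃ e, d = tgt e - src e} →
      (∀ i, 0 < x i) → (∀ e, 0 < β e) →
      (∀ v : Fin n → ℝ,
        ∑ e ∈ univ.filter (fun e => tgt e = v), β e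
          = ∑ e ∈ univ.filter (fun e => src e = v), β e) →
      ∀ w : (Fin n → ℝ) × (E → ℝ),
        w.1 ∈ Submodule.span ℝ {d : Fin n → ℝ | ∃ e, d = tgt e - src e} →
        (∀ v : Fin n → ℝ,
          ∑ e ∈ univ.filter (fun e => tgt e = v), w.2 e
            = ∑ e ∈ univ.filter (fun e => src e = v), w.2 e) →
        fderiv ℝ φ (x, β) w = 0 →
        w = 0 := by
  classical
  have hopen : IsOpen {p : (Fin n → ℝ) × (E → ℝ) | ∀ i, 0 < p.1 i} := by
    have hset : {p : (Fin n → ℝ) × (E → ℝ) | ∀ i, 0 < p.1 i}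
        = ⋂ i, {p : (Fin n → ℝ) × (E → ℝ) | 0 < p.1 i} := by
      ext p; simp [Set.mem_iInter]
    rw [hset]
    exact isOpen_iInter_of_finite fun i =>
      isOpen_lt continuous_const ((continuous_apply i).comp continuous_fst)
  have hsmooth : ContDiffOn ℝ (⊤ : ℕ∞) φ {p : (Fin n → ℝ) × (E → ℝ) | ∀ i, 0 < p.1 i} := by
    have hφf : φ = fun p : (Fin n → ℝ) × (E → ℝ) => fun e => p.2 e / ∏ i, p.1 i ^ src e i :=
      funext hφ
    rw [hφf]
    apply contDiffOn_pi.2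
    intro e p hp
    apply ContDiffAt.contDiffWithinAt
    have hden : ContDiffAt ℝ (⊤ : ℕ∞)
        (fun q : (Fin n → ℝ) × (E → ℝ) => ∏ i, q.1 i ^ src e i) p := by
      refine contDiffAt_finprod _ _ fun i _ => ?_
      exact (Real.contDiffAt_rpow_const_of_ne (hp i).ne').comp p
        ((contDiff_pi.mp contDiff_fst i).contDiffAt)
    have hnum : ContDiffAt ℝ (⊤ : ℕ∞) (fun q : (Fin n → ℝ) × (E → ℝ) => q.2 e) p :=
      (contDiff_pi.mp contDiff_snd e).contDiffAt
    exact hnum.div hden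
      (Finset.prod_pos fun i _ => Real.rpow_pos_of_pos (hp i) _).ne'
  refine ⟨hsmooth, ?_⟩
  intro x β _ hx hβ hβbal w hwS hwbal hder
  have hxmem : (x, β) ∈ {p : (Fin n → ℝ) × (E → ℝ) | ∀ i, 0 < p.1 i} := hx
  have hdiff : DifferentiableAt ℝ φ (x, β) :=
    (hsmooth.contDiffAt (hopen.mem_nhds hxmem)).differentiableAt (by simp)
  -- derivative along the line t ↦ (x, β) + t • w
  have hline : HasDerivAt (fun t : ℝ => (x, β) + t • w) w 0 := by
    have h1 : HasDerivAt (fun t : ℝ => t • w) ((1 : ℝ) • w) 0 :=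
      (hasDerivAt_id (0 : ℝ)).smul_const w
    simpa using h1.const_add (x, β)
  have hcomp : HasDerivAt (fun t : ℝ => φ ((x, β) + t • w)) (fderiv ℝ φ (x, β) w) 0 :=
    HasFDerivAt.comp_hasDerivAt 0 (by simpa using hdiff.hasFDerivAt) hline
  have hcompe : ∀ e : E, HasDerivAt (fun t : ℝ => φ ((x, β) + t • w) e)
      (fderiv ℝ φ (x, β) w e) 0 := fun e =>
    (ContinuousLinearMap.proj (R := ℝ) (φ := fun _ : E => ℝ) e).hasFDerivAt.comp_hasDerivAt
      0 hcomp
  have hPpos : ∀ e : E, (0 : ℝ) < ∏ i, x i ^ src e i := fun e =>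
    Finset.prod_pos fun i _ => Real.rpow_pos_of_pos (hx i) _
  -- the key pointwise identity: w.2 e = β e * ∑ i, src e i * (w.1 i / x i)
  have hkey : ∀ e : E, w.2 e = β e * ∑ i, src e i * (w.1 i / x i) := by
    intro e
    -- explicit derivative of the denominator
    have hP : HasDerivAt (fun t : ℝ => ∏ i, (x i + t * w.1 i) ^ src e i)
        ((∏ i, x i ^ src e i) * ∑ i, src e i * (w.1 i / x i)) 0 := by
      have hfac : ∀ i : Fin n, HasDerivAt (fun t : ℝ => (x i + t * w.1 i) ^ src e i)
          (w.1 i * src e i * x i ^ (src e i - 1)) 0 := by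
        intro i
        have hb : HasDerivAt (fun t : ℝ => x i + t * w.1 i) (w.1 i) 0 := by
          simpa using ((hasDerivAt_id (0 : ℝ)).mul_const (w.1 i)).const_add (x i)
        have h := hb.rpow_const (p := src e i) (Or.inl (by simpa using (hx i).ne'))
        simpa using h
      have h := HasDerivAt.finset_prod (u := Finset.univ)
        (f := fun i (t : ℝ) => (x i + t * w.1 i) ^ src e i)
        (f' := fun i => w.1 i * src e i * x i ^ (src e i - 1))
        (fun i _ => hfac i)
      simp only [zero_mul, add_zero, smul_eq_mul, Finset.prod_fn] at h
      refine h.congr_deriv (Eq.symm ?_)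
      rw [Finset.mul_sum]
      refine Finset.sum_congr rfl fun i _ => ?_
      have hpe : (∏ j ∈ Finset.univ.erase i, x j ^ src e j) * x i ^ src e i
          = ∏ j, x j ^ src e j :=
        Finset.prod_erase_mul _ _ (Finset.mem_univ i)
      have hxm : x i ^ (src e i - 1) = x i ^ src e i / x i := by
        rw [Real.rpow_sub (hx i), Real.rpow_one]
      rw [hxm, ← hpe]
      field_simp
    have hN : HasDerivAt (fun t : ℝ => β e + t * w.2 e) (w.2 e) 0 := by
      simpa using ((hasDerivAt_id (0 : ℝ)).mul_const (w.2 e)).const_add (β e)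
    have hdiv := hN.div hP (by simpa using (hPpos e).ne')
    simp only [zero_mul, add_zero] at hdiv
    have hfun : (fun t : ℝ => φ ((x, β) + t • w) e)
        = fun t : ℝ => (β e + t * w.2 e) / ∏ i, (x i + t * w.1 i) ^ src e i := by
      funext t
      rw [hφ]
      simp [Prod.fst_add, Prod.snd_add, Prod.smul_fst, Prod.smul_snd]
    have he := hcompe e
    rw [hfun] at he
    have huniq := he.unique hdiv
    have hzero : fderiv ℝ φ (x, β) w e = 0 := by rw [hder]; rfl
    rw [hzero] at huniq
    have hA := (div_eq_zero_iff.mp huniq.symm).resolve_right (pow_ne_zero 2 (hPpos e).ne')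
    have h3 : (w.2 e - β e * ∑ i, src e i * (w.1 i / x i)) * (∏ i, x i ^ src e i) = 0 := by
      linear_combination hA
    rcases mul_eq_zero.mp h3 with h4 | h4
    · linarith [sub_eq_zero.mp h4]
    · exact absurd h4 (hPpos e).ne'
  -- combinatorial step
  have horth := quad_core src tgt β (fun c => ∑ i, c i * (w.1 i / x i)) hβ hβbal
    (by
      intro v
      have h1 : ∀ e : E, β e * ∑ i, src e i * (w.1 i / x i) = w.2 e := fun e => (hkey e).symm
      simp only [h1]
      exact hwbal v)
  -- w.1 is orthogonal to itself weighted by 1/x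
  have hspan : ∀ z ∈ Submodule.span ℝ {d : Fin n → ℝ | ∃ e, d = tgt e - src e},
      ∑ i, z i * (w.1 i / x i) = 0 := by
    intro z hz
    induction hz using Submodule.span_induction with
    | mem d hd =>
        obtain ⟨e, rfl⟩ := hd
        have hsub : ∑ i, (tgt e - src e) i * (w.1 i / x i)
            = (∑ i, tgt e i * (w.1 i / x i)) - ∑ i, src e i * (w.1 i / x i) := by
          rw [← Finset.sum_sub_distrib]
          exact Finset.sum_congr rfl fun i _ => by simp [sub_mul]
        rw [hsub]
        exact sub_eq_zero.mpr (horth e)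
    | zero => simp
    | add a b _ _ ha hb =>
        have : ∑ i, (a + b) i * (w.1 i / x i)
            = (∑ i, a i * (w.1 i / x i)) + ∑ i, b i * (w.1 i / x i) := by
          rw [← Finset.sum_add_distrib]
          exact Finset.sum_congr rfl fun i _ => by simp [add_mul]
        rw [this, ha, hb, add_zero]
    | smul a z _ hz =>
        have : ∑ i, (a • z) i * (w.1 i / x i) = a * ∑ i, z i * (w.1 i / x i) := by
          rw [Finset.mul_sum]
          exact Finset.sum_congr rfl fun i _ => by simp [mul_assoc]
        rw [this, hz, mul_zero]
  have hv0 : ∑ i, w.1 i * (w.1 i / x i) = 0 := hspan _ hwS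
  have hv : ∀ i, w.1 i = 0 := by
    intro i
    have hterm : ∀ j ∈ Finset.univ, (0 : ℝ) ≤ w.1 j * (w.1 j / x j) := fun j _ => by
      rw [mul_div_assoc']
      exact div_nonneg (mul_self_nonneg _) (hx j).le
    have h := (Finset.sum_eq_zero_iff_of_nonneg hterm).mp hv0 i (Finset.mem_univ i)
    rw [mul_div_assoc'] at h
    rcases div_eq_zero_iff.mp h with h' | h'
    · exact mul_self_eq_zero.mp h'
    · exact absurd h' (hx i).ne'
  have hv1 : w.1 = 0 := funext hv
  have hw2 : w.2 = 0 := by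
    funext e
    rw [hkey e]
    have : ∑ i, src e i * (w.1 i / x i) = 0 := by
      apply Finset.sum_eq_zero
      intro i _
      rw [hv i]
      simp
    rw [this, mul_zero]
    rfl
  exact Prod.ext hv1 hw2
end

section
/- Let G=(V,E) be a weakly reversible Euclidean embedded graph and x₀ ∈ ℝⁿ_{>0}. The map φ(x,β) = (β_{y→y'}/x^y)_{y→y'∈E} from ((x₀+S)∩ℝⁿ_{>0}) × B(G) to ℝ^E_{>0} is injective. -/
open Finset
open scoped Classical

private lemma toric9_balance {n : ℕ} {E : Type*} [Fintype E]
    (src tgt : E → (Fin n → ℝ)) (β : E → ℝ)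
    (hb : ∀ v : Fin n → ℝ, ∑ e ∈ univ.filter (fun e => tgt e = v), β e
        = ∑ e ∈ univ.filter (fun e => src e = v), β e)
    (g : (Fin n → ℝ) → ℝ) : ∑ e, β e * g (tgt e) = ∑ e, β e * g (src e) := by
  classical
  set V : Finset (Fin n → ℝ) := univ.image tgt ∪ univ.image src with hV
  have h1 : ∀ e ∈ (univ : Finset E), tgt e ∈ V := fun e _ => by
    simp [hV, Finset.mem_union]
  have h2 : ∀ e ∈ (univ : Finset E), src e ∈ V := fun e _ => by
    simp [hV, Finset.mem_union]
  rw [← Finset.sum_fiberwise_of_maps_to h1 (fun e => β e * g (tgt e)),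
      ← Finset.sum_fiberwise_of_maps_to h2 (fun e => β e * g (src e))]
  refine Finset.sum_congr rfl fun v _ => ?_
  have l1 : ∑ e ∈ univ.filter (fun e => tgt e = v), β e * g (tgt e)
      = (∑ e ∈ univ.filter (fun e => tgt e = v), β e) * g v := by
    rw [Finset.sum_mul]
    exact Finset.sum_congr rfl fun e he => by rw [(Finset.mem_filter.mp he).2]
  have l2 : ∑ e ∈ univ.filter (fun e => src e = v), β e * g (src e)
      = (∑ e ∈ univ.filter (fun e => src e = v), β e) * g v := by
    rw [Finset.sum_mul]
    exact Finset.sum_congr rfl fun e he => by rw [(Finset.mem_filter.mp he).2]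
  rw [l1, l2, hb v]

private lemma toric9_prod_exp {n : ℕ} (x : Fin n → ℝ) (hx : ∀ i, 0 < x i)
    (y : Fin n → ℝ) :
    ∏ i, x i ^ y i = Real.exp (∑ i, y i * Real.log (x i)) := by
  rw [Real.exp_sum]
  exact Finset.prod_congr rfl fun i _ => by
    rw [Real.rpow_def_of_pos (hx i), mul_comm]

/-- The map φ(x,β) = (β_{y→y'}/x^y) is injective on
((x₀+S)∩ℝⁿ_{>0}) × B(G). -/
theorem toric_stmt_9 {n : ℕ} {E : Type*} [Fintype E]
    (src tgt : E → (Fin n → ℝ))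
    (hnn : ∀ e i, 0 ≤ src e i ∧ 0 ≤ tgt e i)
    (hwr : ∀ e : E, Relation.ReflTransGen
      (fun a b => ∃ e', src e' = a ∧ tgt e' = b) (tgt e) (src e))
    (x₀ : Fin n → ℝ) (hx₀ : ∀ i, 0 < x₀ i) :
    Set.InjOn (fun p : (Fin n → ℝ) × (E → ℝ) =>
        fun e => p.2 e / ∏ i, p.1 i ^ src e i)
      {p : (Fin n → ℝ) × (E → ℝ) |
        p.1 - x₀ ∈ Submodule.span ℝ {d : Fin n → ℝ | ∃ e, d = tgt e - src e} ∧
        (∀ i, 0 < p.1 i) ∧ (∀ e, 0 < p.2 e) ∧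
        (∀ v : Fin n → ℝ,
          ∑ e ∈ univ.filter (fun e => tgt e = v), p.2 e
            = ∑ e ∈ univ.filter (fun e => src e = v), p.2 e)} := by
  rintro ⟨x, β⟩ ⟨hsp, hx, hβ, hbal⟩ ⟨x', β'⟩ ⟨hsp', hx', hβ', hbal'⟩ hφ
  simp only at hφ
  -- μ = log x' - log x
  set μ : Fin n → ℝ := fun i => Real.log (x' i) - Real.log (x i) with hμ
  set a : E → ℝ := fun e => ∑ i, src e i * μ i with ha
  set b : E → ℝ := fun e => ∑ i, tgt e i * μ i with hb
  -- Claim 1 : β' e = β e * exp (a e)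
  have key : ∀ e, β' e = β e * Real.exp (a e) := by
    intro e
    have he := congrFun hφ e
    rw [toric9_prod_exp x hx, toric9_prod_exp x' hx'] at he
    have hexp : (Real.exp (∑ i, src e i * Real.log (x i))) ≠ 0 := Real.exp_ne_zero _
    have hexp' : (Real.exp (∑ i, src e i * Real.log (x' i))) ≠ 0 := Real.exp_ne_zero _
    field_simp at he
    have : β' e = β e * (Real.exp (∑ i, src e i * Real.log (x' i)) /
        Real.exp (∑ i, src e i * Real.log (x i))) := by
      field_simp
      linarith [he]
    rw [this, ← Real.exp_sub, ← Finset.sum_sub_distrib]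
    congr 1
    · congr 1
      exact Finset.sum_congr rfl fun i _ => by rw [hμ]; ring
  -- sum identities
  have id1 : ∑ e, β e * Real.exp (a e) * (b e - a e) = 0 := by
    have := toric9_balance src tgt β' hbal' (fun y => ∑ i, y i * μ i)
    have h0 : ∑ e, β' e * (b e - a e) = 0 := by
      have : ∑ e, β' e * b e = ∑ e, β' e * a e := this
      calc ∑ e, β' e * (b e - a e) = ∑ e, (β' e * b e - β' e * a e) := by
            exact Finset.sum_congr rfl fun e _ => by ring
        _ = 0 := by rw [Finset.sum_sub_distrib, this, sub_self]
    rw [← h0]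
    exact Finset.sum_congr rfl fun e _ => by rw [key e]
  have id2 : ∑ e, β e * (Real.exp (b e) - Real.exp (a e)) = 0 := by
    have := toric9_balance src tgt β hbal (fun y => Real.exp (∑ i, y i * μ i))
    calc ∑ e, β e * (Real.exp (b e) - Real.exp (a e))
        = ∑ e, (β e * Real.exp (b e) - β e * Real.exp (a e)) :=
          Finset.sum_congr rfl fun e _ => by ring
      _ = 0 := by rw [Finset.sum_sub_distrib, this, sub_self]
  -- each term nonneg of the difference
  have hterm : ∀ e, 0 ≤ β e * (Real.exp (b e) - Real.exp (a e))
      - β e * Real.exp (a e) * (b e - a e) := by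
    intro e
    have h1 : (b e - a e) + 1 ≤ Real.exp (b e - a e) := Real.add_one_le_exp _
    have h3 : Real.exp (b e) = Real.exp (a e) * Real.exp (b e - a e) := by
      rw [← Real.exp_add]; ring_nf
    have h2 : β e * (Real.exp (b e) - Real.exp (a e)) - β e * Real.exp (a e) * (b e - a e)
        = β e * Real.exp (a e) * (Real.exp (b e - a e) - 1 - (b e - a e)) := by
      rw [h3]; ring
    rw [h2]
    exact mul_nonneg (mul_nonneg (hβ e).le (Real.exp_pos _).le) (by linarith)
  have hsum0 : ∑ e, (β e * (Real.exp (b e) - Real.exp (a e))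
      - β e * Real.exp (a e) * (b e - a e)) = 0 := by
    rw [Finset.sum_sub_distrib, id1, id2, sub_self]
  have hall : ∀ e, b e = a e := by
    intro e
    by_contra hne
    have hstrict : 0 < β e * (Real.exp (b e) - Real.exp (a e))
        - β e * Real.exp (a e) * (b e - a e) := by
      have h1 : (b e - a e) + 1 < Real.exp (b e - a e) :=
        Real.add_one_lt_exp (sub_ne_zero.mpr hne)
      have h3 : Real.exp (b e) = Real.exp (a e) * Real.exp (b e - a e) := by
        rw [← Real.exp_add]; ring_nf
      have h2 : β e * (Real.exp (b e) - Real.exp (a e)) - β e * Real.exp (a e) * (b e - a e)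
          = β e * Real.exp (a e) * (Real.exp (b e - a e) - 1 - (b e - a e)) := by
        rw [h3]; ring
      rw [h2]
      exact mul_pos (mul_pos (hβ e) (Real.exp_pos _)) (by linarith)
    have := Finset.sum_eq_zero_iff_of_nonneg (fun e _ => hterm e) |>.mp hsum0 e (mem_univ e)
    linarith
  -- orthogonality: μ ⊥ span
  set L : (Fin n → ℝ) →ₗ[ℝ] ℝ :=
    { toFun := fun d => ∑ i, d i * μ i
      map_add' := fun u v => by
        simp only [Pi.add_apply, add_mul, Finset.sum_add_distrib]
      map_smul' := fun c v => by
        simp only [Pi.smul_apply, smul_eq_mul, RingHom.id_apply, Finset.mul_sum, mul_assoc] }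
    with hL
  have hker : Submodule.span ℝ {d : Fin n → ℝ | ∃ e, d = tgt e - src e}
      ≤ LinearMap.ker L := by
    rw [Submodule.span_le]
    rintro d ⟨e, rfl⟩
    simp only [SetLike.mem_coe, LinearMap.mem_ker, hL, LinearMap.coe_mk, AddHom.coe_mk]
    have : ∑ i, (tgt e - src e) i * μ i = b e - a e := by
      simp only [Pi.sub_apply, sub_mul, Finset.sum_sub_distrib, hb, ha]
    rw [this, hall e, sub_self]
  have hxS : x - x' ∈ Submodule.span ℝ {d : Fin n → ℝ | ∃ e, d = tgt e - src e} := by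
    have : x - x' = (x - x₀) - (x' - x₀) := by ring_nf
    rw [this]
    exact Submodule.sub_mem _ hsp hsp'
  have horth : ∑ i, (x i - x' i) * μ i = 0 := by
    have := hker hxS
    simpa [hL] using this
  -- each term nonpos
  have hxx : x = x' := by
    funext i
    have hterm2 : ∀ j, (x j - x' j) * μ j ≤ 0 := by
      intro j
      rcases lt_trichotomy (x j) (x' j) with h | h | h
      · have : μ j > 0 := sub_pos.mpr (Real.log_lt_log (hx j) h)
        nlinarith
      · simp [hμ, h]
      · have : μ j < 0 := sub_neg.mpr (Real.log_lt_log (hx' j) h)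
        nlinarith
    have : ∀ j ∈ (univ : Finset (Fin n)), (fun j => -((x j - x' j) * μ j)) j = 0 := by
      apply (Finset.sum_eq_zero_iff_of_nonneg (fun j _ => neg_nonneg.mpr (hterm2 j))).mp
      have hns : ∑ j, -((x j - x' j) * μ j) = -∑ j, (x j - x' j) * μ j := by
        simp
      rw [hns, horth, neg_zero]
    have hi := this i (mem_univ i)
    simp only [neg_eq_zero, mul_eq_zero] at hi
    rcases hi with h | h
    · linarith [sub_eq_zero.mp h]
    · have hlog : Real.log (x' i) = Real.log (x i) :=
        sub_eq_zero.mp (by simpa [hμ] using h)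
      have := Real.log_injOn_pos (Set.mem_Ioi.mpr (hx' i)) (Set.mem_Ioi.mpr (hx i)) hlog
      exact this.symm
  have hββ : β = β' := by
    funext e
    have := key e
    have hμ0 : a e = 0 := by
      simp [ha, hμ, hxx]
    rw [this, hμ0, Real.exp_zero, mul_one]
  exact Prod.ext hxx hββ
end

section
/- Let G=(V,E) be a weakly reversible Euclidean embedded graph, k ∈ ℝ^E_{>0}, and suppose x* ∈ ℝⁿ_{>0} is a complex-balanced equilibrium of the mass-action system (G,k). Then every x ∈ ℝⁿ_{>0} with log x ∈ log x* + S^⊥ (where S is the stoichiometric subspace) is also a complex-balanced equilibrium of (G,k). -/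
open Finset
open scoped Classical

lemma prod_rpow_eq_exp {n : ℕ} (x : EuclideanSpace ℝ (Fin n)) (hx : ∀ i, 0 < x i)
    (y : EuclideanSpace ℝ (Fin n)) :
    ∏ i, x i ^ y i = Real.exp (∑ i, Real.log (x i) * y i) := by
  rw [Real.exp_sum]
  exact Finset.prod_congr rfl fun i _ => Real.rpow_def_of_pos (hx i) _

/-- If x* is a complex-balanced equilibrium of (G,k) and
log x ∈ log x* + S^⊥ (S the stoichiometric subspace), then x is also a
complex-balanced equilibrium of (G,k). -/
theorem toric_stmt_12 {n : ℕ} {E : Type*} [Fintype E]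
    (src tgt : E → EuclideanSpace ℝ (Fin n))
    (hwr : ∀ e : E, Relation.ReflTransGen
      (fun a b => ∃ e', src e' = a ∧ tgt e' = b) (tgt e) (src e))
    (k : E → ℝ) (hk : ∀ e, 0 < k e)
    (xs : EuclideanSpace ℝ (Fin n)) (hxs : ∀ i, 0 < xs i)
    (hcb : ∀ v : EuclideanSpace ℝ (Fin n),
      ∑ e ∈ univ.filter (fun e => src e = v), k e * ∏ i, xs i ^ src e i
        = ∑ e ∈ univ.filter (fun e => tgt e = v), k e * ∏ i, xs i ^ src e i)
    (x : EuclideanSpace ℝ (Fin n)) (hx : ∀ i, 0 < x i)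
    (hlog : (WithLp.toLp 2 (fun i => Real.log (x i) - Real.log (xs i)) :
        EuclideanSpace ℝ (Fin n)) ∈
      (Submodule.span ℝ
        {d : EuclideanSpace ℝ (Fin n) | ∃ e, d = tgt e - src e})ᗮ) :
    ∀ v : EuclideanSpace ℝ (Fin n),
      ∑ e ∈ univ.filter (fun e => src e = v), k e * ∏ i, x i ^ src e i
        = ∑ e ∈ univ.filter (fun e => tgt e = v), k e * ∏ i, x i ^ src e i := by
  intro v
  set μ : EuclideanSpace ℝ (Fin n) := WithLp.toLp 2 (fun i => Real.log (x i) - Real.log (xs i)) with hμ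
  -- orthogonality: for each edge, ∑ i, μ i * (tgt e i - src e i) = 0
  have horth : ∀ e : E, ∑ i, μ i * src e i = ∑ i, μ i * tgt e i := by
    intro e
    have h := hlog (tgt e - src e) (Submodule.subset_span ⟨e, rfl⟩)
    have h' : ∑ i, (tgt e - src e) i * μ i = 0 := by
      simpa [EuclideanSpace.inner_eq_star_dotProduct, dotProduct, sub_mul, mul_sub,
        Finset.sum_sub_distrib, mul_comm] using h
    have : ∑ i, (tgt e i - src e i) * μ i = 0 := by
      simpa using h'
    have := this
    rw [Finset.sum_congr rfl (fun i _ => by ring_nf :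
      ∀ i ∈ univ, (tgt e i - src e i) * μ i = tgt e i * μ i - src e i * μ i)] at this
    rw [Finset.sum_sub_distrib] at this
    have h2 : ∑ i, tgt e i * μ i = ∑ i, src e i * μ i := by linarith
    calc ∑ i, μ i * src e i = ∑ i, src e i * μ i := by simp [mul_comm]
      _ = ∑ i, tgt e i * μ i := h2.symm
      _ = ∑ i, μ i * tgt e i := by simp [mul_comm]
  -- key pointwise identity: x^{src e} = exp(L(src e)) * xs^{src e}
  have hkey : ∀ e : E, ∏ i, x i ^ src e i
      = Real.exp (∑ i, μ i * src e i) * ∏ i, xs i ^ src e i := by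
    intro e
    rw [prod_rpow_eq_exp x hx, prod_rpow_eq_exp xs hxs, ← Real.exp_add]
    congr 1
    rw [← Finset.sum_add_distrib]
    exact Finset.sum_congr rfl fun i _ => by simp [hμ]; ring
  have hLv : ∀ e : E, src e = v ∨ tgt e = v →
      ∑ i, μ i * src e i = ∑ i, μ i * v i := by
    rintro e (rfl | h)
    · rfl
    · rw [horth e, h]
  calc ∑ e ∈ univ.filter (fun e => src e = v), k e * ∏ i, x i ^ src e i
      = Real.exp (∑ i, μ i * v i) *
        ∑ e ∈ univ.filter (fun e => src e = v), k e * ∏ i, xs i ^ src e i := by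
        rw [Finset.mul_sum]
        refine Finset.sum_congr rfl fun e he => ?_
        rw [hkey e, hLv e (Or.inl (by simpa using he))]; ring
    _ = Real.exp (∑ i, μ i * v i) *
        ∑ e ∈ univ.filter (fun e => tgt e = v), k e * ∏ i, xs i ^ src e i := by
        rw [hcb v]
    _ = ∑ e ∈ univ.filter (fun e => tgt e = v), k e * ∏ i, x i ^ src e i := by
        rw [Finset.mul_sum]
        refine Finset.sum_congr rfl fun e he => ?_
        rw [hkey e, hLv e (Or.inr (by simpa using he))]; ring
end

section
/- Let S ⊆ ℝⁿ be a linear subspace and x₀ ∈ ℝⁿ_{>0}. Assuming Birch's theorem (for every X ∈ ℝⁿ, the sets exp(X + S^⊥) and x₀ + S intersect in exactly one point), the map φ : ℝⁿ → x₀ + S sending X to the unique point of exp(X + S^⊥) ∩ (x₀ + S) is smooth (C^∞). -/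
open scoped Topology

noncomputable def toricA {n : ℕ} (S : Submodule ℝ (EuclideanSpace ℝ (Fin n))) :
    (EuclideanSpace ℝ (Fin n) × Sᗮ) →L[ℝ] EuclideanSpace ℝ (Fin n) :=
  ContinuousLinearMap.fst ℝ _ _ + Sᗮ.subtypeL.comp (ContinuousLinearMap.snd ℝ _ _)

lemma toricA_apply {n : ℕ} (S : Submodule ℝ (EuclideanSpace ℝ (Fin n)))
    (p : EuclideanSpace ℝ (Fin n) × Sᗮ) (i : Fin n) :
    toricA S p i = p.1 i + (p.2 : EuclideanSpace ℝ (Fin n)) i := rfl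

noncomputable def toricD {n : ℕ} (d : EuclideanSpace ℝ (Fin n)) :
    EuclideanSpace ℝ (Fin n) →L[ℝ] EuclideanSpace ℝ (Fin n) :=
  LinearMap.toContinuousLinearMap
    { toFun := fun v => WithLp.toLp 2 (fun i => d i * v i)
      map_add' := by intro v w; ext i; exact mul_add _ _ _
      map_smul' := by intro c v; ext i; exact mul_left_comm _ _ _ }

lemma toricD_apply {n : ℕ} (d v : EuclideanSpace ℝ (Fin n)) (i : Fin n) :
    toricD d v i = d i * v i := rfl

noncomputable def toricExp {n : ℕ} (x : EuclideanSpace ℝ (Fin n)) : EuclideanSpace ℝ (Fin n) :=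
  WithLp.toLp 2 (fun i => Real.exp (x i))

lemma toricExp_contDiff {n : ℕ} : ContDiff ℝ (⊤ : ℕ∞) (toricExp (n := n)) :=
  contDiff_euclidean.2 fun i => by exact Real.contDiff_exp.comp (EuclideanSpace.proj (𝕜 := ℝ) i).contDiff

lemma toricExp_hasStrictFDerivAt {n : ℕ} (x : EuclideanSpace ℝ (Fin n)) :
    HasStrictFDerivAt toricExp (toricD (toricExp x)) x := by
  rw [hasStrictFDerivAt_euclidean]
  intro i
  have h := (Real.hasStrictDerivAt_exp (x i)).comp_hasStrictFDerivAt x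
      (EuclideanSpace.proj (𝕜 := ℝ) i).hasStrictFDerivAt
  convert h using 1
  · rfl
  · rfl
  · ext v
    simp [toricD_apply, toricExp]

/-- Assuming Birch's theorem (exp(X + S^⊥) ∩ (x₀ + S) is a
singleton for every X), the map φ sending X to the unique intersection
point is C^∞. -/
theorem toric_stmt_15 {n : ℕ} (S : Submodule ℝ (EuclideanSpace ℝ (Fin n)))
    (x₀ : EuclideanSpace ℝ (Fin n)) (hx₀ : ∀ i, 0 < x₀ i)
    (hBirch : ∀ X : EuclideanSpace ℝ (Fin n),
      ∃! z : EuclideanSpace ℝ (Fin n),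
        (∃ w ∈ Sᗮ, z = fun i => Real.exp (X i + w i)) ∧ z - x₀ ∈ S)
    (φ : EuclideanSpace ℝ (Fin n) → EuclideanSpace ℝ (Fin n))
    (hφ : ∀ X, (∃ w ∈ Sᗮ, φ X = fun i => Real.exp (X i + w i)) ∧
      φ X - x₀ ∈ S) :
    ContDiff ℝ (⊤ : ℕ∞) φ := by
  rw [contDiff_iff_contDiffAt]
  intro X₀
  obtain ⟨⟨w₀, hw₀S, hw₀⟩, hφS₀⟩ := hφ X₀
  set A := toricA S with hA
  set P := Sᗮ.orthogonalProjectionOnto with hP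
  set ee : EuclideanSpace ℝ (Fin n) × Sᗮ → EuclideanSpace ℝ (Fin n) :=
    fun p => toricExp (A p) with hee
  set Fm : EuclideanSpace ℝ (Fin n) × Sᗮ → Sᗮ := fun p => P (ee p - x₀) with hFm
  set G : EuclideanSpace ℝ (Fin n) × Sᗮ → EuclideanSpace ℝ (Fin n) × Sᗮ :=
    fun p => (p.1, Fm p) with hG
  set p₀ : EuclideanSpace ℝ (Fin n) × Sᗮ := (X₀, ⟨w₀, hw₀S⟩) with hp₀
  have hee₀ : ee p₀ = φ X₀ := WithLp.ofLp_injective 2 (by rw [hw₀]; rfl)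
  set d : EuclideanSpace ℝ (Fin n) := toricExp (A p₀) with hd
  have hdpos : ∀ i, 0 < d i := fun i => Real.exp_pos _
  have heeC : ContDiff ℝ (⊤ : ℕ∞) ee := toricExp_contDiff.comp A.contDiff
  have hGC : ContDiff ℝ (⊤ : ℕ∞) G :=
    contDiff_fst.prodMk (P.contDiff.comp (heeC.sub contDiff_const))
  have hseeD : HasStrictFDerivAt ee ((toricD d).comp A) p₀ :=
    (toricExp_hasStrictFDerivAt (A p₀)).comp p₀ A.hasStrictFDerivAt
  have hsF : HasStrictFDerivAt Fm (P.comp ((toricD d).comp A)) p₀ :=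
    P.hasStrictFDerivAt.comp p₀ (hseeD.sub_const x₀)
  set T := (ContinuousLinearMap.fst ℝ (EuclideanSpace ℝ (Fin n)) Sᗮ).prod
    (P.comp ((toricD d).comp A)) with hT
  have hsG : HasStrictFDerivAt G T p₀ :=
    (ContinuousLinearMap.fst ℝ _ _).hasStrictFDerivAt.prodMk hsF
  have hTzero : ∀ p, T p = 0 → p = 0 := by
    intro p hp
    have h1 : p.1 = 0 := congrArg Prod.fst hp
    have h2 : P (toricD d (A p)) = 0 := congrArg Prod.snd hp
    have hap : A p = (p.2 : EuclideanSpace ℝ (Fin n)) := by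
      ext i
      rw [hA, toricA_apply, h1]
      simp
    rw [hap] at h2
    set v : EuclideanSpace ℝ (Fin n) := (p.2 : EuclideanSpace ℝ (Fin n)) with hv
    have hinner : (inner ℝ (toricD d v) v : ℝ) = 0 := by
      have h3 := Submodule.starProjection_inner_eq_zero (K := Sᗮ) (toricD d v) v p.2.2
      rw [Submodule.starProjection_apply, h2] at h3
      simpa using h3
    have hsum : ∑ i, d i * v i * v i = 0 := by
      have : (inner ℝ (toricD d v) v : ℝ) = ∑ i, d i * v i * v i := by
        simp [PiLp.inner_apply, toricD_apply, RCLike.inner_apply]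
        exact Finset.sum_congr rfl fun i _ => by ring
      rw [this] at hinner
      exact hinner
    have hterm : ∀ i ∈ Finset.univ, d i * v i * v i = 0 := by
      rw [← Finset.sum_eq_zero_iff_of_nonneg]
      · exact hsum
      · intro i _
        have := mul_nonneg (hdpos i).le (mul_self_nonneg (v i))
        linarith [this]
    have hv0 : v = 0 := by
      ext i
      have h4 := hterm i (Finset.mem_univ i)
      show v i = (0 : EuclideanSpace ℝ (Fin n)) i
      rcases mul_eq_zero.mp h4 with h | h
      · rcases mul_eq_zero.mp h with h' | h'
        · exact absurd h' (hdpos i).ne'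
        · simpa using h'
      · simpa using h
    refine Prod.ext h1 ?_
    exact Subtype.ext hv0
  have hTinj : Function.Injective T := by
    intro p q hpq
    have := hTzero (p - q) (by rw [map_sub, hpq, sub_self])
    exact sub_eq_zero.mp this
  have hTsurj : Function.Surjective T :=
    (LinearMap.injective_iff_surjective
      (f := (T : EuclideanSpace ℝ (Fin n) × Sᗮ →ₗ[ℝ] EuclideanSpace ℝ (Fin n) × Sᗮ))).mp hTinj
  set Teq : (EuclideanSpace ℝ (Fin n) × Sᗮ) ≃L[ℝ] (EuclideanSpace ℝ (Fin n) × Sᗮ) :=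
    (LinearEquiv.ofBijective
      (T : EuclideanSpace ℝ (Fin n) × Sᗮ →ₗ[ℝ] EuclideanSpace ℝ (Fin n) × Sᗮ)
      ⟨hTinj, hTsurj⟩).toContinuousLinearEquiv with hTeqdef
  have hTeq : (Teq : (EuclideanSpace ℝ (Fin n) × Sᗮ) →L[ℝ] (EuclideanSpace ℝ (Fin n) × Sᗮ)) = T :=
    ContinuousLinearMap.ext fun p => rfl
  have hd' : HasFDerivAt G
      (Teq : (EuclideanSpace ℝ (Fin n) × Sᗮ) →L[ℝ] (EuclideanSpace ℝ (Fin n) × Sᗮ)) p₀ := by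
    rw [hTeq]; exact hsG.hasFDerivAt
  have hGp₀ : G p₀ = (X₀, 0) := by
    refine Prod.ext rfl ?_
    show P (ee p₀ - x₀) = 0
    rw [hee₀]
    exact Submodule.orthogonalProjectionOnto_apply_of_mem_orthogonal
      (S.le_orthogonal_orthogonal hφS₀)
  have hGat : ContDiffAt ℝ (⊤ : ℕ∞) G p₀ := hGC.contDiffAt
  set g := hGat.localInverse hd' (by simp) with hgdef
  have hginv : ContDiffAt ℝ (⊤ : ℕ∞) g (G p₀) := hGat.to_localInverse hd' (by simp)
  have hright : ∀ᶠ y in 𝓝 (G p₀), G (g y) = y :=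
    (hGat.hasStrictFDerivAt' hd' (by simp)).eventually_right_inverse
  have htend : Filter.Tendsto (fun X : EuclideanSpace ℝ (Fin n) => (X, (0 : Sᗮ)))
      (𝓝 X₀) (𝓝 (G p₀)) := by
    rw [hGp₀]
    exact Continuous.tendsto (continuous_id.prodMk continuous_const) X₀
  have hev : ∀ᶠ X in 𝓝 X₀, G (g (X, 0)) = (X, 0) := htend.eventually hright
  have hφev : ∀ᶠ X in 𝓝 X₀, φ X = ee (g (X, 0)) := by
    filter_upwards [hev] with X hX
    have h1 : (g (X, 0)).1 = X := congrArg Prod.fst hX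
    have h2 : Fm (g (X, 0)) = 0 := congrArg Prod.snd hX
    have hzS : ee (g (X, 0)) - x₀ ∈ S := by
      have hmem : ee (g (X, 0)) - x₀ ∈ Sᗮᗮ := Submodule.orthogonalProjectionOnto_eq_zero_iff.mp h2
      rwa [Submodule.orthogonal_orthogonal] at hmem
    have hzexp : ∃ w ∈ Sᗮ, ee (g (X, 0)) = fun i => Real.exp (X i + w i) := by
      refine ⟨((g (X, 0)).2 : EuclideanSpace ℝ (Fin n)), (g (X, 0)).2.2, ?_⟩
      funext i
      show Real.exp (A (g (X, 0)) i) = Real.exp (X i + ((g (X, 0)).2 : EuclideanSpace ℝ (Fin n)) i)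
      rw [hA, toricA_apply, h1]
    obtain ⟨z, hz, huniq⟩ := hBirch X
    rw [huniq _ (hφ X), huniq _ ⟨hzexp, hzS⟩]
  have hψ : ContDiffAt ℝ (⊤ : ℕ∞) (fun X => ee (g (X, 0))) X₀ := by
    have hg1 : ContDiffAt ℝ (⊤ : ℕ∞) (fun X : EuclideanSpace ℝ (Fin n) => g (X, (0 : Sᗮ))) X₀ := by
      rw [hGp₀] at hginv
      exact hginv.comp X₀ ((contDiff_id.prodMk contDiff_const).contDiffAt)
    exact heeC.contDiffAt.comp X₀ hg1
  exact hψ.congr_of_eventuallyEq hφev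
end
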